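/- Let D ⊆ ℝ^m be a nonempty compact set, x ∈ ℝ^K, and g : ℝ^K × ℝ^m → ℝ satisfying: (A1) g is bounded on ℝ^K × D and g(·, z) is differentiable at x uniformly in z ∈ D with derivatives D_x g(x,z); (A2) z ↦ D_x g(x, z) is continuous on D and z ↦ g(x, z) is lower semicontinuous on D. Define V(y) := inf_{z∈D} g(y, z), P̃_D(x) := {z ∈ D : V(x) = g(x,z)}, and Y(x) := {D_x g(x,z) : z ∈ P̃_D(x)}. Then the subdifferential satisfies: D⁻V(x) = {y} if Y(x) is the singleton {y}, and D⁻V(x) = ∅ if Y(x) is not a singleton. -/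
import Mathlib

open Filter Topology Set

lemma lsc_exists_min {β : Type*} [TopologicalSpace β] {s : Set β} (hs : IsCompact s)
    (hne : s.Nonempty) {f : β → ℝ} (hf : LowerSemicontinuousOn f s) :
    ∃ z ∈ s, ∀ w ∈ s, f z ≤ f w := by
  by_contra h
  push_neg at h
  choose w hw hwlt using h
  have hU : ∀ z (hz : z ∈ s), ∃ U ∈ 𝓝 z, ∀ u ∈ U ∩ s, f (w z hz) < f u := by
    intro z hz
    have := hf z hz (f (w z hz)) (hwlt z hz)
    rw [eventually_nhdsWithin_iff] at this
    rcases this.exists_mem with ⟨U, hUm, hUp⟩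
    exact ⟨U, hUm, fun u hu => hUp u hu.1 hu.2⟩
  choose U hUm hUp using hU
  obtain ⟨t, ht⟩ := hs.elim_nhds_subcover' U hUm
  have htne : t.Nonempty := by
    obtain ⟨z, hz⟩ := hne
    rcases Set.mem_iUnion₂.1 (ht hz) with ⟨i, hi, _⟩
    exact ⟨i, hi⟩
  obtain ⟨i₀, hi₀t, hi₀min⟩ := t.exists_min_image (fun i => f (w i.1 i.2)) htne
  have hwmem : w i₀.1 i₀.2 ∈ s := hw _ _
  rcases Set.mem_iUnion₂.1 (ht hwmem) with ⟨j, hjt, hjU⟩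
  have h1 : f (w j.1 j.2) < f (w i₀.1 i₀.2) := hUp j.1 j.2 _ ⟨hjU, hwmem⟩
  exact absurd (hi₀min j hjt) (not_le.2 h1)



open Filter Topology
open scoped RealInnerProductSpace

/-- The subdifferential `D⁻V(x)`: the set of `p` with
`liminf_{y→x} (V(y) − V(x) − ⟪p, y − x⟫)/‖y − x‖ ≥ 0`. -/
noncomputable def subDiff {K : ℕ} (V : EuclideanSpace ℝ (Fin K) → ℝ)
    (x : EuclideanSpace ℝ (Fin K)) : Set (EuclideanSpace ℝ (Fin K)) :=
  {p | (0 : EReal) ≤ Filter.liminf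
      (fun y => (((V y - V x - ⟪p, y - x⟫) / ‖y - x‖ : ℝ) : EReal)) (𝓝[≠] x)}

/-- envelope theorem, subdifferential part: with
`V(y) = inf_{z∈D} g(y,z)` as in the envelope theorem, the subdifferential
`D⁻V(x)` equals `{y}` if `Y(x) = {y}` is a singleton, and is empty if `Y(x)`
is not a singleton. -/
theorem stmt6 {K m : ℕ}
    (D : Set (EuclideanSpace ℝ (Fin m))) (hne : D.Nonempty) (hcomp : IsCompact D)
    (x : EuclideanSpace ℝ (Fin K))
    (g : EuclideanSpace ℝ (Fin K) → EuclideanSpace ℝ (Fin m) → ℝ)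
    (Dg : EuclideanSpace ℝ (Fin m) → EuclideanSpace ℝ (Fin K))
    (hbdd : ∃ M : ℝ, ∀ y, ∀ z ∈ D, |g y z| ≤ M)
    (hdiff : ∀ ε > (0 : ℝ), ∃ δ > (0 : ℝ), ∀ z ∈ D, ∀ y,
      ‖y - x‖ < δ → |g y z - g x z - ⟪Dg z, y - x⟫| ≤ ε * ‖y - x‖)
    (hDgcont : ContinuousOn Dg D)
    (hglsc : LowerSemicontinuousOn (fun z => g x z) D)
    (V : EuclideanSpace ℝ (Fin K) → ℝ)
    (hV : ∀ y, V y = sInf ((fun z => g y z) '' D))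
    (Pt : Set (EuclideanSpace ℝ (Fin m))) (hPt : Pt = {z ∈ D | V x = g x z})
    (Y : Set (EuclideanSpace ℝ (Fin K))) (hY : Y = Dg '' Pt) :
    (∀ y, Y = {y} → subDiff V x = {y}) ∧
      ((¬ ∃ y, Y = {y}) → subDiff V x = ∅) := by
  obtain ⟨M, hM⟩ := hbdd
  have hbb : ∀ y, BddBelow ((fun z => g y z) '' D) := by
    intro y
    refine ⟨-M, ?_⟩
    rintro _ ⟨z, hz, rfl⟩
    have := (abs_le.1 (hM y z hz)).1
    linarith
  have hVle : ∀ y, ∀ z ∈ D, V y ≤ g y z := by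
    intro y z hz
    rw [hV y]
    exact csInf_le (hbb y) ⟨z, hz, rfl⟩
  -- Pt nonempty
  have hPtne : Pt.Nonempty := by
    obtain ⟨z₀, hz₀, hmin⟩ := lsc_exists_min hcomp hne hglsc
    refine ⟨z₀, ?_⟩
    rw [hPt]
    refine ⟨hz₀, le_antisymm (hVle x z₀ hz₀) ?_⟩
    rw [hV x]
    exact le_csInf (hne.image _) (by rintro _ ⟨z, hz, rfl⟩; exact hmin z hz)
  -- bound on Dg
  obtain ⟨B, hB, hB0⟩ : ∃ B : ℝ, (∀ z ∈ D, ‖Dg z‖ ≤ B) ∧ 0 ≤ B := by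
    obtain ⟨C, hC⟩ := isBounded_iff_forall_norm_le.1
      (hcomp.image_of_continuousOn hDgcont).isBounded
    obtain ⟨z₀, hz₀⟩ := hne
    exact ⟨max C 0, fun z hz => le_max_of_le_left (hC _ ⟨z, hz, rfl⟩), le_max_right _ _⟩
  -- approximate minimizers
  have happrox : ∀ y : EuclideanSpace ℝ (Fin K), ∀ η > (0:ℝ), ∃ z ∈ D, g y z < V y + η := by
    intro y η hη
    have : sInf ((fun z => g y z) '' D) < V y + η := by rw [← hV y]; linarith
    obtain ⟨_, ⟨z, hz, rfl⟩, hlt⟩ := exists_lt_of_csInf_lt (hne.image _) this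
    exact ⟨z, hz, hlt⟩
  -- Sub-lemma A': any subgradient equals Dg z for every z ∈ Pt
  have hA : ∀ p, p ∈ subDiff V x → ∀ z ∈ Pt, p = Dg z := by
    intro p hp z hzPt
    by_contra hpq
    have hzD : z ∈ D := by rw [hPt] at hzPt; exact hzPt.1
    have hgxz : V x = g x z := by rw [hPt] at hzPt; exact hzPt.2
    set q := Dg z with hq
    set r := ‖p - q‖ with hrdef
    have hr : (0:ℝ) < r := norm_sub_pos_iff.2 hpq
    obtain ⟨δ, hδ, hd⟩ := hdiff (r/4) (by positivity)
    have h0 : (((-(r/4) : ℝ)) : EReal) < Filter.liminf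
        (fun y => (((V y - V x - ⟪p, y - x⟫) / ‖y - x‖ : ℝ) : EReal)) (𝓝[≠] x) := by
      refine lt_of_lt_of_le ?_ hp
      have : ((-(r/4):ℝ) : EReal) < ((0:ℝ) : EReal) := EReal.coe_lt_coe_iff.2 (by linarith)
      simpa using this
    have hev := Filter.eventually_lt_of_lt_liminf h0
    rw [eventually_nhdsWithin_iff, Metric.eventually_nhds_iff] at hev
    obtain ⟨ρ, hρ, hball⟩ := hev
    set t := min δ ρ / 2 with htdef
    have ht0 : (0:ℝ) < t := by positivity
    set v := (r⁻¹ : ℝ) • (p - q) with hv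
    have hvn : ‖v‖ = 1 := by
      rw [hv, norm_smul, norm_inv, Real.norm_eq_abs, abs_of_pos hr, ← hrdef]
      field_simp
    set y' := x + t • v with hy'
    have hyx : y' - x = t • v := by rw [hy']; abel
    have hnorm : ‖y' - x‖ = t := by rw [hyx, norm_smul, hvn, Real.norm_eq_abs, abs_of_pos ht0, mul_one]
    have hyne : y' ≠ x := by
      intro h
      rw [h, sub_self, norm_zero] at hnorm
      linarith
    have htδ : t < δ := by
      rw [htdef]
      have : min δ ρ ≤ δ := min_le_left _ _
      linarith
    have htρ : t < ρ := by
      rw [htdef]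
      have : min δ ρ ≤ ρ := min_le_right _ _
      linarith
    have hdist : dist y' x < ρ := by rw [dist_eq_norm, hnorm]; exact htρ
    have hlt : ‖y' - x‖ < δ := by rw [hnorm]; exact htδ
    have e1 : g y' z - g x z - ⟪q, y' - x⟫ ≤ (r/4) * ‖y' - x‖ := (abs_le.1 (hd z hzD y' hlt)).2
    have hVub : V y' ≤ g y' z := hVle y' z hzD
    have hinner : ⟪q - p, y' - x⟫ = -(t * r) := by
      rw [hyx, real_inner_smul_right, hv, real_inner_smul_right]
      have h1 : ⟪q - p, p - q⟫ = -(r * r) := by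
        rw [show q - p = -(p - q) by abel, inner_neg_left, real_inner_self_eq_norm_mul_norm, ← hrdef]
      rw [h1]
      field_simp
    have hnum : V y' - V x - ⟪p, y' - x⟫ ≤ (r/4) * t - t * r := by
      have h2 : ⟪p, y' - x⟫ = ⟪q, y' - x⟫ - ⟪q - p, y' - x⟫ := by
        rw [← inner_sub_left]
        congr 1
        abel
      rw [h2, hinner]
      rw [hnorm] at e1
      have := hgxz
      linarith
    have hfy : (V y' - V x - ⟪p, y' - x⟫) / ‖y' - x‖ ≤ r/4 - r := by
      rw [hnorm, div_le_iff₀ ht0]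
      calc V y' - V x - ⟪p, y' - x⟫ ≤ (r/4) * t - t * r := hnum
        _ = (r/4 - r) * t := by ring
    have hlb := hball hdist hyne
    have hlb' : -(r/4) < (V y' - V x - ⟪p, y' - x⟫) / ‖y' - x‖ := by exact_mod_cast hlb
    linarith
  -- Sub-lemma D: separation
  have hD : ∀ c > (0:ℝ), ∀ y₀, Y = {y₀} →
      ∃ θ > (0:ℝ), ∀ z ∈ D, g x z ≤ V x + θ → ‖Dg z - y₀‖ ≤ c := by
    intro c hc y₀ hY₀
    set A := {z ∈ D | c ≤ ‖Dg z - y₀‖} with hAdef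
    have hAsub : A ⊆ D := fun z hz => hz.1
    rcases A.eq_empty_or_nonempty with hAe | hAne
    · refine ⟨1, one_pos, fun z hz _ => ?_⟩
      by_contra hzc
      have : z ∈ A := ⟨hz, (not_le.1 hzc).le⟩
      rw [hAe] at this
      exact this
    · have hAclosed : IsClosed A := by
        have hAeq : A = D ∩ (fun z => ‖Dg z - y₀‖) ⁻¹' (Set.Ici c) := by
          ext z
          simp [hAdef, Set.mem_sep_iff]
        rw [hAeq]
        exact ContinuousOn.preimage_isClosed_of_isClosed
          ((hDgcont.sub continuousOn_const).norm) hcomp.isClosed isClosed_Ici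
      have hAcomp : IsCompact A := hcomp.of_isClosed_subset hAclosed hAsub
      obtain ⟨z₁, hz₁A, hz₁min⟩ := lsc_exists_min hAcomp hAne (hglsc.mono hAsub)
      have hz₁D : z₁ ∈ D := hz₁A.1
      have hz₁notPt : z₁ ∉ Pt := by
        intro hin
        have hmem : Dg z₁ ∈ Y := by rw [hY]; exact ⟨z₁, hin, rfl⟩
        rw [hY₀, Set.mem_singleton_iff] at hmem
        have hcle := hz₁A.2
        rw [hmem, sub_self, norm_zero] at hcle
        linarith
      have hgt : V x < g x z₁ := by
        rcases lt_or_eq_of_le (hVle x z₁ hz₁D) with h | h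
        · exact h
        · exact absurd (by rw [hPt]; exact ⟨hz₁D, h⟩) hz₁notPt
      refine ⟨(g x z₁ - V x)/2, by linarith, fun z hz hle => ?_⟩
      by_contra hzc
      have hzA : z ∈ A := ⟨hz, (not_le.1 hzc).le⟩
      have := hz₁min z hzA
      linarith
  -- Sub-lemma B: membership
  have hB' : ∀ y₀, Y = {y₀} → y₀ ∈ subDiff V x := by
    intro y₀ hY₀
    have hevt : ∀ ε > (0:ℝ), ∀ᶠ y' in 𝓝[≠] x,
        ((-ε : ℝ) : EReal) ≤ (((V y' - V x - ⟪y₀, y' - x⟫) / ‖y' - x‖ : ℝ) : EReal) := by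
      intro ε hε
      set ε₁ := min (ε/4) 1 with hε₁def
      have hε₁0 : 0 < ε₁ := lt_min (by linarith) one_pos
      have hε₁a : ε₁ ≤ ε/4 := min_le_left _ _
      have hε₁b : ε₁ ≤ 1 := min_le_right _ _
      obtain ⟨δ₁, hδ₁, hd₁⟩ := hdiff ε₁ hε₁0
      obtain ⟨θ, hθ0, hθ⟩ := hD (ε/4) (by linarith) y₀ hY₀
      obtain ⟨z₀, hz₀Pt⟩ := hPtne
      have hz₀D : z₀ ∈ D := by rw [hPt] at hz₀Pt; exact hz₀Pt.1
      have hz₀eq : V x = g x z₀ := by rw [hPt] at hz₀Pt; exact hz₀Pt.2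
      set C := ε/4 + 2*B + 2 with hCdef
      have hC0 : (0:ℝ) < C := by rw [hCdef]; linarith
      rw [eventually_nhdsWithin_iff, Metric.eventually_nhds_iff]
      refine ⟨min δ₁ (θ/C), lt_min hδ₁ (by positivity), fun y' hdist hyne => ?_⟩
      have hyne' : y' ≠ x := hyne
      set n := ‖y' - x‖ with hn
      have hn0 : (0:ℝ) < n := norm_sub_pos_iff.2 hyne'
      rw [dist_eq_norm] at hdist
      have hnδ₁ : n < δ₁ := lt_of_lt_of_le hdist (min_le_left _ _)
      have hnθ : n < θ/C := lt_of_lt_of_le hdist (min_le_right _ _)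
      have hCn : C * n < θ := by
        rw [lt_div_iff₀ hC0] at hnθ
        linarith [hnθ]
      obtain ⟨z', hz'D, hz'lt⟩ := happrox y' ((ε/4) * n) (by positivity)
      have e1 := abs_le.1 (hd₁ z' hz'D y' hnδ₁)
      have e2 := abs_le.1 (hd₁ z₀ hz₀D y' hnδ₁)
      have e3 : |⟪Dg z', y' - x⟫| ≤ B * n :=
        le_trans (abs_real_inner_le_norm _ _) (mul_le_mul_of_nonneg_right (hB z' hz'D) hn0.le)
      have e4 : |⟪Dg z₀, y' - x⟫| ≤ B * n :=
        le_trans (abs_real_inner_le_norm _ _) (mul_le_mul_of_nonneg_right (hB z₀ hz₀D) hn0.le)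
      have e3' := abs_le.1 e3
      have e4' := abs_le.1 e4
      have hε₁n : ε₁ * n ≤ n := by
        have := mul_le_mul_of_nonneg_right hε₁b hn0.le
        linarith
      have hVu : V y' ≤ V x + (B + 1) * n := by
        have h7 := hVle y' z₀ hz₀D
        have hexp : (B + 1) * n = B * n + n := by ring
        linarith [e2.2, e4'.2]
      have hgxz' : g x z' ≤ V x + θ := by
        have h8 : g x z' ≤ g y' z' - ⟪Dg z', y' - x⟫ + ε₁ * n := by linarith [e1.1]
        have hCexp : C * n = (ε/4) * n + 2 * (B * n) + 2 * n := by rw [hCdef]; ring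
        have hexp : (B + 1) * n = B * n + n := by ring
        clear_value ε₁ C n
        linarith [e3'.1, hz'lt, hVu, hCn, hε₁n]
      have hclose : ‖Dg z' - y₀‖ ≤ ε/4 := hθ z' hz'D hgxz'
      have hip : -((ε/4) * n) ≤ ⟪Dg z' - y₀, y' - x⟫ := by
        have h9 : |⟪Dg z' - y₀, y' - x⟫| ≤ (ε/4) * n :=
          le_trans (abs_real_inner_le_norm _ _) (mul_le_mul_of_nonneg_right hclose hn0.le)
        linarith [(abs_le.1 h9).1]
      have hVlb : -(ε * n) ≤ V y' - V x - ⟪y₀, y' - x⟫ := by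
        have h5 : ⟪y₀, y' - x⟫ = ⟪Dg z', y' - x⟫ - ⟪Dg z' - y₀, y' - x⟫ := by
          rw [← inner_sub_left]
          congr 1
          abel
        have h6 : V x ≤ g x z' := hVle x z' hz'D
        have h10 : g y' z' - (ε/4) * n ≤ V y' := by linarith [hz'lt]
        have h11 : g x z' + ⟪Dg z', y' - x⟫ - ε₁ * n ≤ g y' z' := by linarith [e1.1]
        have hε₁n' : ε₁ * n ≤ (ε/4) * n := mul_le_mul_of_nonneg_right hε₁a hn0.le
        rw [h5]
        linarith
      have hfinal : (-ε : ℝ) ≤ (V y' - V x - ⟪y₀, y' - x⟫) / n := by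
        rw [le_div_iff₀ hn0]
        linarith [hVlb]
      exact EReal.coe_le_coe_iff.2 hfinal
    show (0 : EReal) ≤ Filter.liminf
        (fun y => (((V y - V x - ⟪y₀, y - x⟫) / ‖y - x‖ : ℝ) : EReal)) (𝓝[≠] x)
    set L := Filter.liminf
        (fun y => (((V y - V x - ⟪y₀, y - x⟫) / ‖y - x‖ : ℝ) : EReal)) (𝓝[≠] x) with hLdef
    have hLge : ∀ ε > (0:ℝ), ((-ε : ℝ) : EReal) ≤ L :=
      fun ε hε => Filter.le_liminf_of_le (by isBoundedDefault) (hevt ε hε)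
    by_contra hlt
    push_neg at hlt
    have h1 : ((-1 : ℝ) : EReal) ≤ L := hLge 1 one_pos
    have hLbot : L ≠ ⊥ := by
      intro h
      rw [h, le_bot_iff] at h1
      exact EReal.coe_ne_bot _ h1
    have hLtop : L ≠ ⊤ := fun h => by simp [h] at hlt
    set l := L.toReal with hl
    have hLl : L = (l : EReal) := (EReal.coe_toReal hLtop hLbot).symm
    have hl0 : l < 0 := by
      rw [hLl] at hlt
      exact_mod_cast hlt
    have h2 := hLge (-l/2) (by linarith)
    rw [hLl] at h2
    have h3 : -(-l/2) ≤ l := EReal.coe_le_coe_iff.1 h2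
    linarith
  constructor
  · intro y hYy
    obtain ⟨z, hzPt, hzy⟩ : ∃ z ∈ Pt, Dg z = y := by
      have : y ∈ Y := by rw [hYy]; rfl
      rw [hY] at this; exact this
    ext p
    simp only [Set.mem_singleton_iff]
    constructor
    · intro hp
      rw [hA p hp z hzPt, hzy]
    · intro h
      rw [h]
      exact hB' y hYy
  · intro hnot
    ext p
    simp only [Set.mem_empty_iff_false, iff_false]
    intro hp
    apply hnot
    refine ⟨p, ?_⟩
    ext q
    simp only [Set.mem_singleton_iff]
    constructor
    · intro hq
      rw [hY] at hq
      obtain ⟨z, hzPt, rfl⟩ := hq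
      exact (hA p hp z hzPt).symm
    · intro h
      obtain ⟨z, hzPt⟩ := hPtne
      have hpz : p = Dg z := hA p hp z hzPt
      rw [h, hY, hpz]
      exact ⟨z, hzPt, rfl⟩
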